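/- For q ∈ (0,1], σ > 0, integer α ≥ 2, and the mixture μ = (1-q)N(0,σ²) + qN(1,σ²), it holds that max(A_α, B_α) with A_α = E_{z∼μ₀}[(μ(z)/μ₀(z))^α] and B_α = E_{z∼μ}[(μ₀(z)/μ(z))^α] satisfies A_α ≥ B_α, where μ₀ = N(0,σ²). -/

import Mathlib

/-!
Pair each point `z` with its mirror image `1 - z`: the reflection preserves Lebesgue measure and
swaps `N(0,σ²)` and `N(1,σ²)`. With `u = μ₀(z)`, `v = μ₁(z)`, `m = μ(z)`, `m' = μ(1 - z)` one has
`m + m' = u + v` and `m m' - u v = q(1-q)(u-v)² ≥ 0`, so the ratios `P = m/u`, `Q = m'/v` have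
`u`-`v`-weighted mean one and `PQ ≥ 1`. For such ratios `u P^(1-n) + v Q^(1-n) ≤ u P^n + v Q^n`,
by induction on `n`: the increment is `u (P-1) ((P^n + P^-n) - (Q^n + Q^-n))`, which is
nonnegative because `x + x⁻¹` increases on `[1, ∞)` and whichever of `P`, `Q` exceeds one dominates
the inverse of the other.
-/

/-- The Gaussian probability density function with mean `m` and variance `σ²`. -/
noncomputable def gpdf (m σ x : ℝ) : ℝ :=
  (Real.sqrt (2 * Real.pi * σ ^ 2))⁻¹ * Real.exp (-(x - m) ^ 2 / (2 * σ ^ 2))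

/-- Density of the mixture `(1-q)·N(0,σ²) + q·N(1,σ²)`. -/
noncomputable def mixpdf (q σ z : ℝ) : ℝ := (1 - q) * gpdf 0 σ z + q * gpdf 1 σ z

open Real MeasureTheory ProbabilityTheory

lemma add_inv_le_add_inv {a b : ℝ} (ha : 1 ≤ a) (hab : a ≤ b) : a + a⁻¹ ≤ b + b⁻¹ := by
  have hb : 0 < b := by linarith
  have key : b + b⁻¹ - (a + a⁻¹) = (b - a) * (a * b - 1) / (a * b) := by
    field_simp
    ring
  rw [← sub_nonneg, key]
  exact div_nonneg (mul_nonneg (by linarith) (by nlinarith)) (by positivity)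

lemma pow_add_inv_pow_le_of_inv_le {P Q : ℝ} (hQ : 0 < Q) (hQ1 : Q ≤ 1) (hQP : Q⁻¹ ≤ P) (n : ℕ) :
    Q ^ n + Q⁻¹ ^ n ≤ P ^ n + P⁻¹ ^ n := by
  have h1 : 1 ≤ Q⁻¹ := (one_le_inv₀ hQ).mpr hQ1
  have := add_inv_le_add_inv (one_le_pow₀ h1) (pow_le_pow_left₀ (zero_le_one.trans h1) hQP n)
  simpa only [inv_pow, inv_inv, add_comm] using this

lemma sub_one_mul_pow_add_inv_pow_le {P Q : ℝ} (hP : 0 < P) (hQ : 0 < Q) (hPQ : 1 ≤ P * Q)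
    (hsign : (P - 1) * (Q - 1) ≤ 0) (n : ℕ) :
    (P - 1) * (Q ^ n + Q⁻¹ ^ n) ≤ (P - 1) * (P ^ n + P⁻¹ ^ n) := by
  rcases le_or_gt Q 1 with hQ1 | hQ1
  · have hQP : Q⁻¹ ≤ P := (inv_le_iff_one_le_mul₀ hQ).mpr (by linarith)
    have hP1 : 1 ≤ P := ((one_le_inv₀ hQ).mpr hQ1).trans hQP
    exact mul_le_mul_of_nonneg_left (pow_add_inv_pow_le_of_inv_le hQ hQ1 hQP n) (by linarith)
  · have hP1 : P ≤ 1 := by nlinarith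
    have hPQ : P⁻¹ ≤ Q := (inv_le_iff_one_le_mul₀ hP).mpr (by linarith)
    exact mul_le_mul_of_nonpos_left (pow_add_inv_pow_le_of_inv_le hP hP1 hPQ n) (by linarith)

lemma weighted_inv_pow_mul_le_pow {u v P Q : ℝ} (hu : 0 < u) (hv : 0 < v) (hP : 0 < P)
    (hQ : 0 < Q) (hmean : u * P + v * Q = u + v) (hPQ : 1 ≤ P * Q) (n : ℕ) :
    u * (P⁻¹ ^ n * P) + v * (Q⁻¹ ^ n * Q) ≤ u * P ^ n + v * Q ^ n := by
  have hsign : (P - 1) * (Q - 1) ≤ 0 := by nlinarith [sq_nonneg (Q - 1)]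
  induction n with
  | zero => simp only [pow_zero, one_mul]; linarith
  | succ n ih =>
    have step := mul_le_mul_of_nonneg_left
      (sub_one_mul_pow_add_inv_pow_le hP hQ hPQ hsign n) hu.le
    have hPn : P⁻¹ ^ (n + 1) * P = P⁻¹ ^ n := by
      rw [pow_succ, mul_assoc, inv_mul_cancel₀ hP.ne', mul_one]
    have hQn : Q⁻¹ ^ (n + 1) * Q = Q⁻¹ ^ n := by
      rw [pow_succ, mul_assoc, inv_mul_cancel₀ hQ.ne', mul_one]
    rw [hPn, hQn]
    linear_combination ih + step - (Q ^ n + Q⁻¹ ^ n) * hmean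

lemma two_point_moment_le {u v m m' : ℝ} (hu : 0 < u) (hv : 0 < v) (hm : 0 < m) (hm' : 0 < m')
    (hsum : m + m' = u + v) (hprod : u * v ≤ m * m') (n : ℕ) :
    (u / m) ^ n * m + (v / m') ^ n * m' ≤ (m / u) ^ n * u + (m' / v) ^ n * v := by
  have hmean : u * (m / u) + v * (m' / v) = u + v := by
    rw [mul_div_cancel₀ _ hu.ne', mul_div_cancel₀ _ hv.ne', hsum]
  have hPQ : 1 ≤ m / u * (m' / v) := by
    rw [div_mul_div_comm, one_le_div (mul_pos hu hv)]
    exact hprod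
  have key := weighted_inv_pow_mul_le_pow hu hv (div_pos hm hu) (div_pos hm' hv) hmean hPQ n
  rw [inv_div, inv_div] at key
  convert key using 2 <;> field_simp

lemma integral_le_of_add_reflect_le {G : Type*} [MeasurableSpace G] [AddGroup G] [MeasurableAdd G]
    [MeasurableNeg G] {μ : Measure G} [μ.IsNegInvariant] [μ.IsAddLeftInvariant] {f g : G → ℝ}
    (a : G) (hf : 0 ≤ f) (hg : Integrable g μ) (hfg : ∀ x, f x + f (a - x) ≤ g x + g (a - x)) :
    ∫ x, f x ∂μ ≤ ∫ x, g x ∂μ := by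
  have reflect_add : ∀ h : G → ℝ, Integrable h μ → ∫ x, (h x + h (a - x)) ∂μ = 2 * ∫ x, h x ∂μ :=
    fun h hh ↦ by rw [integral_add hh (hh.comp_sub_left a), integral_sub_left_eq_self, two_mul]
  by_cases hfi : Integrable f μ
  · have := integral_mono (f := fun x ↦ f x + f (a - x)) (g := fun x ↦ g x + g (a - x))
      (hfi.add (hfi.comp_sub_left a)) (hg.add (hg.comp_sub_left a)) hfg
    rw [reflect_add f hfi, reflect_add g hg] at this
    linarith
  · -- a non-integrable `f` has the junk integral `0`
    have := integral_nonneg (μ := μ) (f := fun x ↦ g x + g (a - x))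
      fun x ↦ (add_nonneg (hf x) (hf (a - x))).trans (hfg x)
    rw [reflect_add g hg] at this
    rw [integral_undef hfi]
    linarith

lemma gpdf_eq_gaussianPDFReal (m σ : ℝ) : gpdf m σ = gaussianPDFReal m ⟨σ ^ 2, sq_nonneg σ⟩ := rfl

lemma gpdf_pos (m : ℝ) {σ : ℝ} (hσ : σ ≠ 0) (x : ℝ) : 0 < gpdf m σ x := by
  rw [gpdf_eq_gaussianPDFReal]
  exact gaussianPDFReal_pos _ _ _ fun h ↦
    hσ (pow_eq_zero_iff two_ne_zero |>.mp (congrArg Subtype.val h))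

lemma integrable_gpdf (m σ : ℝ) : Integrable (gpdf m σ) := by
  rw [gpdf_eq_gaussianPDFReal]
  exact integrable_gaussianPDFReal _ _

@[fun_prop]
lemma measurable_gpdf (m σ : ℝ) : Measurable (gpdf m σ) := by
  rw [gpdf_eq_gaussianPDFReal]
  exact measurable_gaussianPDFReal _ _

lemma gpdf_sub_left (a m σ x : ℝ) : gpdf m σ (a - x) = gpdf (a - m) σ x := by
  unfold gpdf
  ring_nf

lemma gpdf_div_gpdf_pow_mul {σ : ℝ} (hσ : σ ≠ 0) (n : ℕ) (x : ℝ) :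
    (gpdf 1 σ x / gpdf 0 σ x) ^ n * gpdf 0 σ x
      = exp (((n : ℝ) ^ 2 - n) / (2 * σ ^ 2)) * gpdf n σ x := by
  unfold gpdf
  rw [mul_div_mul_left _ _ (by positivity), ← exp_sub, ← exp_nat_mul, mul_left_comm,
    ← exp_add, mul_left_comm, ← exp_add]
  congr 2
  field_simp
  ring

lemma mixpdf_pos {q σ : ℝ} (hσ : σ ≠ 0) (hq0 : 0 ≤ q) (hq1 : q ≤ 1) (x : ℝ) :
    0 < mixpdf q σ x := by
  have hmin : 0 < min (gpdf 0 σ x) (gpdf 1 σ x) := lt_min (gpdf_pos 0 hσ x) (gpdf_pos 1 hσ x)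
  unfold mixpdf
  nlinarith [mul_nonneg (sub_nonneg.2 hq1) (sub_nonneg.2 (min_le_left (gpdf 0 σ x) (gpdf 1 σ x))),
    mul_nonneg hq0 (sub_nonneg.2 (min_le_right (gpdf 0 σ x) (gpdf 1 σ x)))]

lemma mixpdf_div_gpdf {q σ : ℝ} (hσ : σ ≠ 0) (x : ℝ) :
    mixpdf q σ x / gpdf 0 σ x = 1 - q + q * (gpdf 1 σ x / gpdf 0 σ x) := by
  have := (gpdf_pos 0 hσ x).ne'
  unfold mixpdf
  field_simp

lemma integrable_mixpdf_div_gpdf_pow_mul {q σ : ℝ} (hσ : σ ≠ 0) (hq0 : 0 ≤ q) (hq1 : q ≤ 1)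
    (n : ℕ) :
    Integrable fun x ↦ (mixpdf q σ x / gpdf 0 σ x) ^ n * gpdf 0 σ x := by
  refine ((integrable_gpdf 0 σ).const_mul (1 - q)).add
    ((integrable_gpdf n σ).const_mul (q * exp (((n : ℝ) ^ 2 - n) / (2 * σ ^ 2))))
    |>.mono' (by unfold mixpdf; fun_prop) (ae_of_all _ fun x ↦ ?_)
  have hg := gpdf_pos 0 hσ x
  have hr : 0 ≤ gpdf 1 σ x / gpdf 0 σ x := (div_pos (gpdf_pos 1 hσ x) hg).le
  have jensen := (convexOn_pow n).2 (Set.mem_Ici.2 zero_le_one) (Set.mem_Ici.2 hr)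
    (sub_nonneg.2 hq1) hq0 (sub_add_cancel 1 q)
  simp only [smul_eq_mul, mul_one, one_pow] at jensen
  have hm := mixpdf_pos hσ hq0 hq1 x
  rw [Real.norm_of_nonneg (mul_nonneg (pow_nonneg (div_pos hm hg).le n) hg.le),
    mixpdf_div_gpdf hσ]
  calc (1 - q + q * (gpdf 1 σ x / gpdf 0 σ x)) ^ n * gpdf 0 σ x
      ≤ (1 - q + q * (gpdf 1 σ x / gpdf 0 σ x) ^ n) * gpdf 0 σ x :=
        mul_le_mul_of_nonneg_right jensen hg.le
    _ = (1 - q) * gpdf 0 σ x + q * exp (((n : ℝ) ^ 2 - n) / (2 * σ ^ 2)) * gpdf n σ x := by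
        rw [add_mul, mul_assoc, gpdf_div_gpdf_pow_mul hσ]; ring

lemma mixpdf_one_sub (q σ x : ℝ) :
    mixpdf q σ (1 - x) = (1 - q) * gpdf 1 σ x + q * gpdf 0 σ x := by
  simp only [mixpdf, gpdf_sub_left, sub_zero, sub_self]

lemma mixpdf_moment_add_reflect_le {q σ : ℝ} (hσ : σ ≠ 0) (hq0 : 0 ≤ q) (hq1 : q ≤ 1) (n : ℕ)
    (x : ℝ) :
    (gpdf 0 σ x / mixpdf q σ x) ^ n * mixpdf q σ x
        + (gpdf 0 σ (1 - x) / mixpdf q σ (1 - x)) ^ n * mixpdf q σ (1 - x)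
      ≤ (mixpdf q σ x / gpdf 0 σ x) ^ n * gpdf 0 σ x
        + (mixpdf q σ (1 - x) / gpdf 0 σ (1 - x)) ^ n * gpdf 0 σ (1 - x) := by
  have hm' := mixpdf_pos hσ hq0 hq1 (1 - x)
  rw [mixpdf_one_sub] at hm' ⊢
  rw [gpdf_sub_left, sub_zero]
  refine two_point_moment_le (gpdf_pos 0 hσ x) (gpdf_pos 1 hσ x) (mixpdf_pos hσ hq0 hq1 x) hm'
    (by unfold mixpdf; ring) ?_ n
  unfold mixpdf
  nlinarith [mul_nonneg (mul_nonneg hq0 (sub_nonneg.2 hq1)) (sq_nonneg (gpdf 0 σ x - gpdf 1 σ x))]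

theorem sgm_A_ge_B_general (σ q : ℝ) (hσ : 0 < σ) (hq0 : 0 < q) (hq1 : q ≤ 1)
    (α : ℕ) :
    (∫ z : ℝ, (gpdf 0 σ z / mixpdf q σ z) ^ α * mixpdf q σ z)
      ≤ ∫ z : ℝ, (mixpdf q σ z / gpdf 0 σ z) ^ α * gpdf 0 σ z := by
  have hm := mixpdf_pos hσ.ne' hq0.le hq1
  refine integral_le_of_add_reflect_le 1 (fun z ↦ ?_)
    (integrable_mixpdf_div_gpdf_pow_mul hσ.ne' hq0.le hq1 α)
    (mixpdf_moment_add_reflect_le hσ.ne' hq0.le hq1 α)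
  exact mul_nonneg (pow_nonneg (div_pos (gpdf_pos 0 hσ.ne' z) (hm z)).le α) (hm z).le

/-- For `q ∈ (0,1]`, `σ > 0`, integer `α ≥ 2`, with `μ₀ = N(0,σ²)` and mixture
`μ = (1-q)N(0,σ²) + qN(1,σ²)`, the two moments
`A_α = E_{z∼μ₀}[(μ(z)/μ₀(z))^α]` and `B_α = E_{z∼μ}[(μ₀(z)/μ(z))^α]`
satisfy `A_α ≥ B_α` (so `max(A_α, B_α) = A_α`). -/
theorem sgm_A_ge_B (σ q : ℝ) (hσ : 0 < σ) (hq0 : 0 < q) (hq1 : q ≤ 1)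
    (α : ℕ) (hα : 2 ≤ α) :
    (∫ z : ℝ, (gpdf 0 σ z / mixpdf q σ z) ^ α * mixpdf q σ z)
      ≤ ∫ z : ℝ, (mixpdf q σ z / gpdf 0 σ z) ^ α * gpdf 0 σ z :=
  sgm_A_ge_B_general σ q hσ hq0 hq1 α
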